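/- arXiv:2507.06619 — 2 statements merged into one kernel-verified Lean document; each statement's English description precedes it below -/
import Mathlib

section
/- For real numbers m₁, m₂, a variance v > 0, and α > 1, the Rényi divergence of order α between the real Gaussian measures N(m₁, v) and N(m₂, v) equals α · (m₁ − m₂)² / (2v). -/
/-! Writing `N(m, v)` as the density `pₘ` times Lebesgue measure, `∫ (dN₁/dN₂)^α dN₂` becomes
`∫ p₁^α p₂^(1-α)`. Completing the square in the exponent, `p₁^α p₂^(1-α)` is
`exp (α(α-1)(m₁-m₂)²/(2v))` times the density of `N(α m₁ + (1-α) m₂, v)`, so the integral is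
that exponential, and `(α - 1)⁻¹` times its logarithm is `α(m₁-m₂)²/(2v)`. -/

open MeasureTheory Real ProbabilityTheory

/-- The Rényi divergence of order `α` between two measures:
`D_α(μ‖ν) = (1/(α−1)) · log ∫ (dμ/dν)^α dν`. -/
noncomputable def renyiDiv {X : Type*} [MeasurableSpace X] (α : ℝ) (μ ν : Measure X) : ℝ :=
  (α - 1)⁻¹ * Real.log (∫ x, (μ.rnDeriv ν x).toReal ^ α ∂ν)

section WithDensity

variable {X : Type*} [MeasurableSpace X] {ρ : Measure X} [SigmaFinite ρ] {f g : X → ENNReal}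

lemma toReal_rnDeriv_withDensity_withDensity (hf : AEMeasurable f ρ) (hg : AEMeasurable g ρ)
    (hf_top : ∀ᵐ x ∂ρ, f x ≠ ⊤) (hg_zero : ∀ᵐ x ∂ρ, g x ≠ 0) (hg_top : ∀ᵐ x ∂ρ, g x ≠ ⊤) :
    (fun x ↦ ((ρ.withDensity f).rnDeriv (ρ.withDensity g) x).toReal)
      =ᵐ[ρ] fun x ↦ (f x).toReal / (g x).toReal := by
  have := SigmaFinite.withDensity_of_ne_top hf_top
  filter_upwards [Measure.rnDeriv_withDensity_right (ρ.withDensity f) ρ hg hg_zero hg_top,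
    Measure.rnDeriv_withDensity₀ ρ hf] with x hx hx'
  rw [hx, hx', ENNReal.toReal_mul, ENNReal.toReal_inv, inv_mul_eq_div]

lemma integral_rpow_toReal_rnDeriv_withDensity (hf : AEMeasurable f ρ) (hg : AEMeasurable g ρ)
    (hf_top : ∀ᵐ x ∂ρ, f x ≠ ⊤) (hg_zero : ∀ᵐ x ∂ρ, g x ≠ 0) (hg_top : ∀ᵐ x ∂ρ, g x ≠ ⊤)
    (α : ℝ) :
    ∫ x, ((ρ.withDensity f).rnDeriv (ρ.withDensity g) x).toReal ^ α ∂ρ.withDensity g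
      = ∫ x, (f x).toReal ^ α * (g x).toReal ^ (1 - α) ∂ρ := by
  rw [integral_withDensity_eq_integral_toReal_smul₀ hg
    (hg_top.mono fun _ ↦ Ne.lt_top)]
  refine integral_congr_ae ?_
  filter_upwards [toReal_rnDeriv_withDensity_withDensity hf hg hf_top hg_zero hg_top, hg_zero,
    hg_top] with x hx hx0 hxtop
  have hgx : 0 < (g x).toReal := ENNReal.toReal_pos hx0 hxtop
  rw [hx, smul_eq_mul, div_rpow ENNReal.toReal_nonneg hgx.le, rpow_sub hgx, rpow_one]
  field_simp

end WithDensity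

lemma gaussianPDFReal_rpow_mul_rpow (m₁ m₂ : ℝ) {v : NNReal} (hv : v ≠ 0) (α x : ℝ) :
    gaussianPDFReal m₁ v x ^ α * gaussianPDFReal m₂ v x ^ (1 - α)
      = exp (α * (α - 1) * (m₁ - m₂) ^ 2 / (2 * v))
        * gaussianPDFReal (α * m₁ + (1 - α) * m₂) v x := by
  have hs : 0 < (√(2 * π * v))⁻¹ := by positivity
  simp only [gaussianPDFReal]
  rw [mul_rpow hs.le (exp_pos _).le, mul_rpow hs.le (exp_pos _).le, ← exp_mul, ← exp_mul,
    mul_mul_mul_comm, ← rpow_add hs, add_sub_cancel, rpow_one, ← exp_add, mul_left_comm,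
    ← exp_add]
  congr 2
  have hv' : (v : ℝ) ≠ 0 := by exact_mod_cast hv
  field_simp
  ring

lemma integral_gaussianPDFReal_rpow_mul_rpow (m₁ m₂ : ℝ) {v : NNReal} (hv : v ≠ 0) (α : ℝ) :
    ∫ x, gaussianPDFReal m₁ v x ^ α * gaussianPDFReal m₂ v x ^ (1 - α)
      = exp (α * (α - 1) * (m₁ - m₂) ^ 2 / (2 * v)) := by
  simp_rw [gaussianPDFReal_rpow_mul_rpow m₁ m₂ hv, integral_const_mul,
    integral_gaussianPDFReal_eq_one _ hv, mul_one]

lemma integral_rpow_toReal_rnDeriv_gaussianReal (m₁ m₂ : ℝ) {v : NNReal} (hv : v ≠ 0) (α : ℝ) :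
    ∫ x, ((gaussianReal m₁ v).rnDeriv (gaussianReal m₂ v) x).toReal ^ α ∂gaussianReal m₂ v
      = exp (α * (α - 1) * (m₁ - m₂) ^ 2 / (2 * v)) := by
  rw [gaussianReal_of_var_ne_zero _ hv, gaussianReal_of_var_ne_zero _ hv,
    integral_rpow_toReal_rnDeriv_withDensity (measurable_gaussianPDF _ _).aemeasurable
      (measurable_gaussianPDF _ _).aemeasurable (ae_of_all _ fun _ ↦ gaussianPDF_ne_top)
      (ae_of_all _ fun x ↦ (gaussianPDF_pos m₂ hv x).ne') (ae_of_all _ fun _ ↦ gaussianPDF_ne_top)]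
  simp only [toReal_gaussianPDF, integral_gaussianPDFReal_rpow_mul_rpow m₁ m₂ hv]

/-- The Rényi divergence of order `α > 1` between two real Gaussians of equal variance `v > 0`
is `α (m₁ − m₂)² / (2v)`. -/
theorem renyiDiv_gaussianReal (m₁ m₂ : ℝ) (v : NNReal) (hv : 0 < v) (α : ℝ) (hα : 1 < α) :
    renyiDiv α (gaussianReal m₁ v) (gaussianReal m₂ v) = α * (m₁ - m₂) ^ 2 / (2 * (v : ℝ)) := by
  have hα₁ : α - 1 ≠ 0 := sub_ne_zero.2 hα.ne'
  rw [renyiDiv, integral_rpow_toReal_rnDeriv_gaussianReal m₁ m₂ hv.ne', log_exp]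
  field_simp
end

section
/- Fix n ∈ ℕ, α > 1, and 0 < δ < 1. For each t ∈ {0, …, n} let C_t > 0 and σ_t > 0, and let m_t, m'_t ∈ ℝ satisfy |m_t − m'_t| ≤ C_t. Let μ = ⊗_{t=0}^{n} N(m_t, C_t²σ_t²) and ν = ⊗_{t=0}^{n} N(m'_t, C_t²σ_t²) on ℝ^{n+1}. Then for every measurable set S ⊆ ℝ^{n+1}, μ(S) ≤ exp( ∑_{t=0}^{n} α/(2σ_t²) + log((α−1)/α) − (log δ + log α)/(α−1) ) · ν(S) + δ. -/
/-!
With `vₜ = Cₜ²σₜ²`, `μ` has density `F x = ∏ₜ exp(((xₜ - m'ₜ)² - (xₜ - mₜ)²)/(2vₜ))` with respect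
to `ν`, and Fubini together with the one-dimensional Gaussian moment identity gives
`∫ F^α dν = exp(∑ₜ α(α-1)(mₜ - m'ₜ)²/(2vₜ)) ≤ exp((α-1)R)` for `R = ∑ₜ α/(2σₜ²)`: this is the
Rényi bound. Hölder's inequality then gives `μ S = ∫_S F dν ≤ e^((α-1)R/α) ν(S)^((α-1)/α)`, and a
weighted AM-GM inequality splits the right-hand side into `e^ε ν(S) + δ`, `ε` being the exponent
of the claim.
-/

open MeasureTheory Real ProbabilityTheory
open scoped ENNReal NNReal

section PiMeasure

variable {ι : Type*} [Fintype ι] {X : ι → Type*} [∀ i, MeasurableSpace (X i)]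
  {μ : (i : ι) → Measure (X i)} [∀ i, IsProbabilityMeasure (μ i)]

lemma lintegral_pi_prod_eq_prod {f : (i : ι) → X i → ℝ≥0∞} (hf : ∀ i, Measurable (f i)) :
    ∫⁻ x, ∏ i, f i (x i) ∂Measure.pi μ = ∏ i, ∫⁻ y, f i y ∂μ i := by
  rw [lintegral_prod_eq_prod_lintegral_of_indepFun _ _ (iIndepFun_pi fun i => (hf i).aemeasurable)
    fun i => (hf i).comp (measurable_pi_apply i)]
  exact Finset.prod_congr rfl fun i _ => (measurePreserving_eval μ i).lintegral_comp (hf i)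

lemma pi_withDensity_eq {f : (i : ι) → X i → ℝ≥0∞} (hf : ∀ i, Measurable (f i))
    [∀ i, SigmaFinite ((μ i).withDensity (f i))] :
    Measure.pi (fun i => (μ i).withDensity (f i))
      = (Measure.pi μ).withDensity fun x => ∏ i, f i (x i) := by
  refine Measure.pi_eq fun s hs => ?_
  have hbox : ∀ x, (Set.univ.pi s).indicator (fun x => ∏ i, f i (x i)) x
      = ∏ i, (s i).indicator (f i) (x i) := by
    classical
    intro x
    simp [Set.indicator_apply, Finset.prod_ite_zero]
  rw [withDensity_apply _ (.univ_pi hs), ← lintegral_indicator (.univ_pi hs)]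
  simp_rw [hbox]
  rw [lintegral_pi_prod_eq_prod fun i => (hf i).indicator (hs i)]
  exact Finset.prod_congr rfl fun i _ => by
    rw [lintegral_indicator (hs i), withDensity_apply _ (hs i)]

end PiMeasure

section GaussianRatio

/-- The density of `N(m, v)` with respect to `N(m', v)`. -/
noncomputable def gaussianRatio (m m' : ℝ) (v : ℝ≥0) (x : ℝ) : ℝ :=
  exp (((x - m') ^ 2 - (x - m) ^ 2) / (2 * v))

@[fun_prop]
lemma measurable_gaussianRatio (m m' : ℝ) (v : ℝ≥0) : Measurable (gaussianRatio m m' v) := by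
  unfold gaussianRatio; fun_prop

lemma gaussianRatio_nonneg (m m' : ℝ) (v : ℝ≥0) (x : ℝ) : 0 ≤ gaussianRatio m m' v x :=
  (exp_pos _).le

variable {v : ℝ≥0}

lemma gaussianPDFReal_mul_gaussianRatio_rpow (m m' : ℝ) (hv : v ≠ 0) (α x : ℝ) :
    gaussianPDFReal m' v x * gaussianRatio m m' v x ^ α
      = exp (α * (α - 1) * (m - m') ^ 2 / (2 * v)) * gaussianPDFReal (m' + α * (m - m')) v x := by
  have hv' : (v : ℝ) ≠ 0 := NNReal.coe_ne_zero.mpr hv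
  simp only [gaussianPDFReal, gaussianRatio, ← exp_mul]
  rw [mul_assoc, ← exp_add, mul_left_comm, ← exp_add]
  congr 2
  field_simp
  ring

lemma gaussianReal_eq_withDensity_gaussianRatio (m m' : ℝ) (hv : v ≠ 0) :
    gaussianReal m v
      = (gaussianReal m' v).withDensity fun x => ENNReal.ofReal (gaussianRatio m m' v x) := by
  rw [gaussianReal_of_var_ne_zero m hv, gaussianReal_of_var_ne_zero m' hv,
    ← withDensity_mul _ (measurable_gaussianPDF _ _) (by fun_prop)]
  congr 1
  funext x
  have := gaussianPDFReal_mul_gaussianRatio_rpow m m' hv 1 x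
  simp only [rpow_one, sub_self, mul_zero, zero_mul, zero_div, exp_zero, one_mul] at this
  simp only [Pi.mul_apply, gaussianPDF, ← ENNReal.ofReal_mul (gaussianPDFReal_nonneg _ _ _), this]
  ring_nf

lemma lintegral_gaussianRatio_rpow (m m' : ℝ) (hv : v ≠ 0) {α : ℝ} (hα : 0 ≤ α) :
    ∫⁻ x, ENNReal.ofReal (gaussianRatio m m' v x) ^ α ∂gaussianReal m' v
      = ENNReal.ofReal (exp (α * (α - 1) * (m - m') ^ 2 / (2 * v))) := by
  rw [gaussianReal_of_var_ne_zero m' hv,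
    lintegral_withDensity_eq_lintegral_mul _ (measurable_gaussianPDF _ _) (by fun_prop)]
  have hdens : ∀ x, gaussianPDF m' v x * ENNReal.ofReal (gaussianRatio m m' v x) ^ α
      = ENNReal.ofReal (exp (α * (α - 1) * (m - m') ^ 2 / (2 * v)))
        * gaussianPDF (m' + α * (m - m')) v x := by
    intro x
    rw [gaussianPDF, gaussianPDF, ENNReal.ofReal_rpow_of_nonneg (gaussianRatio_nonneg _ _ _ _) hα,
      ← ENNReal.ofReal_mul (gaussianPDFReal_nonneg _ _ _),
      ← ENNReal.ofReal_mul (exp_nonneg _), gaussianPDFReal_mul_gaussianRatio_rpow m m' hv]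
  simp_rw [Pi.mul_apply, hdens]
  rw [lintegral_const_mul _ (measurable_gaussianPDF _ _), lintegral_gaussianPDF_eq_one _ hv, mul_one]

end GaussianRatio

section PiGaussian

variable {ι : Type*} [Fintype ι] (m m' : ι → ℝ) {v : ι → ℝ≥0}

lemma pi_gaussianReal_eq_withDensity (hv : ∀ i, v i ≠ 0) :
    Measure.pi (fun i => gaussianReal (m i) (v i))
      = (Measure.pi fun i => gaussianReal (m' i) (v i)).withDensity
          fun x => ∏ i, ENNReal.ofReal (gaussianRatio (m i) (m' i) (v i) (x i)) := by
  have hdens : (fun i => gaussianReal (m i) (v i))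
      = fun i => (gaussianReal (m' i) (v i)).withDensity
          fun x => ENNReal.ofReal (gaussianRatio (m i) (m' i) (v i) x) :=
    funext fun i => gaussianReal_eq_withDensity_gaussianRatio (m i) (m' i) (hv i)
  have : ∀ i, SigmaFinite ((gaussianReal (m' i) (v i)).withDensity
      fun x => ENNReal.ofReal (gaussianRatio (m i) (m' i) (v i) x)) := fun i => by
    rw [← congrFun hdens i]; infer_instance
  rw [hdens, pi_withDensity_eq fun i => by fun_prop]

lemma lintegral_prod_gaussianRatio_rpow (hv : ∀ i, v i ≠ 0) {α : ℝ} (hα : 0 ≤ α) :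
    ∫⁻ x, (∏ i, ENNReal.ofReal (gaussianRatio (m i) (m' i) (v i) (x i))) ^ α
        ∂Measure.pi (fun i => gaussianReal (m' i) (v i))
      = ∏ i, ENNReal.ofReal (exp (α * (α - 1) * (m i - m' i) ^ 2 / (2 * v i))) := by
  simp_rw [← ENNReal.prod_rpow_of_nonneg hα]
  rw [lintegral_pi_prod_eq_prod
    (f := fun i y => ENNReal.ofReal (gaussianRatio (m i) (m' i) (v i) y) ^ α) fun i => by fun_prop]
  exact Finset.prod_congr rfl fun i _ => lintegral_gaussianRatio_rpow (m i) (m' i) (hv i) hα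

end PiGaussian

section RenyiToApproxDP

lemma withDensity_apply_le_lintegral_rpow_mul {Ω : Type*} [MeasurableSpace Ω] {ν : Measure Ω}
    {F : Ω → ℝ≥0∞} (hF : AEMeasurable F ν) {α : ℝ} (hα : 1 < α) {S : Set Ω}
    (hS : MeasurableSet S) :
    ν.withDensity F S ≤ (∫⁻ x, F x ^ α ∂ν) ^ (1 / α) * ν S ^ ((α - 1) / α) := by
  have hconj : α.HolderConjugate (α / (α - 1)) := Real.HolderConjugate.conjExponent hα
  set ind : Ω → ℝ≥0∞ := S.indicator 1
  have hind : ∫⁻ x, ind x ^ (α / (α - 1)) ∂ν = ν S := by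
    have hpow : ∀ x, ind x ^ (α / (α - 1)) = ind x := fun x => by
      by_cases hx : x ∈ S <;> simp [ind, hx, hconj.symm.pos]
    simp_rw [hpow]
    exact lintegral_indicator_one hS
  calc ν.withDensity F S = ∫⁻ x, (F * ind) x ∂ν := by
        rw [withDensity_apply _ hS, ← lintegral_indicator hS]
        congr with x
        by_cases hx : x ∈ S <;> simp [ind, hx]
    _ ≤ _ := ENNReal.lintegral_mul_le_Lp_mul_Lq ν hconj hF (aemeasurable_one.indicator hS)
    _ = _ := by rw [hind, one_div_div]

lemma exp_mul_rpow_le_exp_mul_add {α δ Q : ℝ} (hα : 1 < α) (hδ : 0 < δ) (hQ : 0 ≤ Q) (R : ℝ) :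
    exp ((α - 1) / α * R) * Q ^ ((α - 1) / α)
      ≤ exp (R + log ((α - 1) / α) - (log δ + log α) / (α - 1)) * Q + δ := by
  have hα0 : 0 < α := by linarith
  have hα1 : α - 1 ≠ 0 := by linarith
  set γ := (α - 1) / α
  have hγ : 0 < γ := div_pos (by linarith) hα0
  set ε := R + log γ - (log δ + log α) / (α - 1)
  -- weighted AM-GM with weights `γ` and `1 / α`, tuned so that the two terms are `e^ε Q` and `δ`
  have amgm := geom_mean_le_arith_mean2_weighted hγ.le (one_div_pos.mpr hα0).le
    (mul_nonneg (exp_nonneg (ε - log γ)) hQ) (exp_nonneg (log α + log δ))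
    (by simp only [γ]; field_simp; ring)
  have hlhs : (exp (ε - log γ) * Q) ^ γ * exp (log α + log δ) ^ (1 / α)
      = exp (γ * R) * Q ^ γ := by
    rw [mul_rpow (exp_nonneg _) hQ, ← exp_mul, ← exp_mul, mul_right_comm, ← exp_add]
    congr 2
    simp only [ε, γ]
    field_simp
    ring
  have hrhs : γ * (exp (ε - log γ) * Q) + 1 / α * exp (log α + log δ) = exp ε * Q + δ := by
    rw [exp_sub, exp_log hγ, exp_add, exp_log hα0, exp_log hδ]
    field_simp
  rwa [hlhs, hrhs] at amgm

theorem withDensity_apply_le_of_lintegral_rpow_le {Ω : Type*} [MeasurableSpace Ω]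
    {ν : Measure Ω} [IsFiniteMeasure ν] {F : Ω → ℝ≥0∞} (hF : AEMeasurable F ν) {α δ R : ℝ}
    (hα : 1 < α) (hδ : 0 < δ) (hmom : ∫⁻ x, F x ^ α ∂ν ≤ ENNReal.ofReal (exp ((α - 1) * R)))
    {S : Set Ω} (hS : MeasurableSet S) :
    ν.withDensity F S
      ≤ ENNReal.ofReal (exp (R + log ((α - 1) / α) - (log δ + log α) / (α - 1))) * ν S
        + ENNReal.ofReal δ := by
  have hα0 : 0 < α := by linarith
  have hγ : 0 ≤ (α - 1) / α := div_nonneg (by linarith) hα0.le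
  set Q := (ν S).toReal
  have hQ : ν S = ENNReal.ofReal Q := (ENNReal.ofReal_toReal (measure_ne_top ν S)).symm
  have hmom' : (∫⁻ x, F x ^ α ∂ν) ^ (1 / α) ≤ ENNReal.ofReal (exp ((α - 1) / α * R)) := by
    calc (∫⁻ x, F x ^ α ∂ν) ^ (1 / α) ≤ ENNReal.ofReal (exp ((α - 1) * R)) ^ (1 / α) :=
          ENNReal.rpow_le_rpow hmom (by positivity)
      _ = ENNReal.ofReal (exp ((α - 1) / α * R)) := by
          rw [ENNReal.ofReal_rpow_of_nonneg (exp_nonneg _) (by positivity), ← exp_mul]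
          ring_nf
  calc ν.withDensity F S ≤ (∫⁻ x, F x ^ α ∂ν) ^ (1 / α) * ν S ^ ((α - 1) / α) :=
        withDensity_apply_le_lintegral_rpow_mul hF hα hS
    _ ≤ ENNReal.ofReal (exp ((α - 1) / α * R) * Q ^ ((α - 1) / α)) := by
        rw [ENNReal.ofReal_mul (exp_nonneg _), hQ,
          ENNReal.ofReal_rpow_of_nonneg ENNReal.toReal_nonneg hγ]
        gcongr
    _ ≤ ENNReal.ofReal (exp (R + log ((α - 1) / α) - (log δ + log α) / (α - 1)) * Q + δ) :=
        ENNReal.ofReal_le_ofReal (exp_mul_rpow_le_exp_mul_add hα hδ ENNReal.toReal_nonneg R)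
    _ = _ := by
        rw [ENNReal.ofReal_add (by positivity) hδ.le, ENNReal.ofReal_mul (exp_nonneg _), ← hQ]

end RenyiToApproxDP

lemma gaussian_renyi_exponent_le {α C σ d : ℝ} (hα : 1 < α) (hC : 0 < C) (hσ : 0 < σ)
    (hd : |d| ≤ C) :
    α * (α - 1) * d ^ 2 / (2 * (C ^ 2 * σ ^ 2)) ≤ (α - 1) * (α / (2 * σ ^ 2)) := by
  have hd2 : d ^ 2 ≤ C ^ 2 := sq_le_sq' (neg_le_of_abs_le hd) (le_of_abs_le hd)
  calc α * (α - 1) * d ^ 2 / (2 * (C ^ 2 * σ ^ 2))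
      ≤ α * (α - 1) * C ^ 2 / (2 * (C ^ 2 * σ ^ 2)) := by
        have : 0 ≤ α * (α - 1) := by nlinarith
        gcongr
    _ = (α - 1) * (α / (2 * σ ^ 2)) := by field_simp

theorem sad_dpsgd_dp_general (n : ℕ) (α : ℝ) (hα : 1 < α) (δ : ℝ) (hδ0 : 0 < δ)
    (C σ : Fin (n + 1) → ℝ) (hC : ∀ t, 0 < C t) (hσ : ∀ t, 0 < σ t)
    (m m' : Fin (n + 1) → ℝ) (hm : ∀ t, |m t - m' t| ≤ C t)
    (S : Set (Fin (n + 1) → ℝ)) (hS : MeasurableSet S) :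
    (Measure.pi fun t => gaussianReal (m t) ((C t) ^ 2 * (σ t) ^ 2).toNNReal) S ≤
      ENNReal.ofReal
          (Real.exp ((∑ t : Fin (n + 1), α / (2 * (σ t) ^ 2)) + Real.log ((α - 1) / α)
            - (Real.log δ + Real.log α) / (α - 1)))
        * (Measure.pi fun t => gaussianReal (m' t) ((C t) ^ 2 * (σ t) ^ 2).toNNReal) S
      + ENNReal.ofReal δ := by
  have hvar : ∀ t, 0 < C t ^ 2 * σ t ^ 2 := fun t => by have := hC t; have := hσ t; positivity
  set v : Fin (n + 1) → ℝ≥0 := fun t => ((C t) ^ 2 * (σ t) ^ 2).toNNReal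
  have hv : ∀ t, (v t : ℝ) = C t ^ 2 * σ t ^ 2 := fun t => Real.coe_toNNReal _ (hvar t).le
  have hv0 : ∀ t, v t ≠ 0 := fun t => (Real.toNNReal_pos.mpr (hvar t)).ne'
  rw [pi_gaussianReal_eq_withDensity m m' hv0]
  refine withDensity_apply_le_of_lintegral_rpow_le (Measurable.aemeasurable (by fun_prop))
    hα hδ0 ?_ hS
  rw [lintegral_prod_gaussianRatio_rpow m m' hv0 (by linarith),
    ← ENNReal.ofReal_prod_of_nonneg fun t _ => (exp_pos _).le, ← exp_sum, Finset.mul_sum]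
  gcongr with t
  rw [hv t]
  exact gaussian_renyi_exponent_le hα (hC t) (hσ t) (hm t)

/-- End-to-end privacy guarantee of SAD-DPSGD: for the products of the per-step Gaussian
mechanisms `N(m_t, C_t²σ_t²)` and `N(m'_t, C_t²σ_t²)` with per-step sensitivities
`|m_t − m'_t| ≤ C_t`, every measurable `S ⊆ ℝ^{n+1}` satisfies
`μ S ≤ exp(∑_t α/(2σ_t²) + log((α−1)/α) − (log δ + log α)/(α−1)) · ν S + δ`. -/
theorem sad_dpsgd_dp (n : ℕ) (α : ℝ) (hα : 1 < α) (δ : ℝ) (hδ0 : 0 < δ) (hδ1 : δ < 1)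
    (C σ : Fin (n + 1) → ℝ) (hC : ∀ t, 0 < C t) (hσ : ∀ t, 0 < σ t)
    (m m' : Fin (n + 1) → ℝ) (hm : ∀ t, |m t - m' t| ≤ C t)
    (S : Set (Fin (n + 1) → ℝ)) (hS : MeasurableSet S) :
    (Measure.pi fun t => gaussianReal (m t) ((C t) ^ 2 * (σ t) ^ 2).toNNReal) S ≤
      ENNReal.ofReal
          (Real.exp ((∑ t : Fin (n + 1), α / (2 * (σ t) ^ 2)) + Real.log ((α - 1) / α)
            - (Real.log δ + Real.log α) / (α - 1)))
        * (Measure.pi fun t => gaussianReal (m' t) ((C t) ^ 2 * (σ t) ^ 2).toNNReal) S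
      + ENNReal.ofReal δ :=
  sad_dpsgd_dp_general n α hα δ hδ0 C σ hC hσ m m' hm S hS
end
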